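/- Any DC matrix-valued function F : ℝ^d → S^ℓ (that is, F = G − H for some matrix convex G, H : ℝ^d → S^ℓ) is componentwise DC: each component F_ij, i, j ∈ {1,…,ℓ}, is the difference of two convex real-valued functions on ℝ^d. -/

import Mathlib

open Matrix

/-- A matrix-valued function is matrix convex if
`α • F x₁ + (1 - α) • F x₂ - F (α • x₁ + (1 - α) • x₂)` is positive semidefinite. -/
def MatrixConvex {d l : ℕ} (F : EuclideanSpace ℝ (Fin d) → Matrix (Fin l) (Fin l) ℝ) : Prop :=
  ∀ (x₁ x₂ : EuclideanSpace ℝ (Fin d)) (α : ℝ), α ∈ Set.Icc (0 : ℝ) 1 →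
    (α • F x₁ + (1 - α) • F x₂ - F (α • x₁ + (1 - α) • x₂)).PosSemidef

lemma quad_convex {d l : ℕ} (G : EuclideanSpace ℝ (Fin d) → Matrix (Fin l) (Fin l) ℝ)
    (hG : MatrixConvex G) (v : Fin l → ℝ) :
    ConvexOn ℝ Set.univ (fun x => v ⬝ᵥ (G x) *ᵥ v) := by
  refine ⟨convex_univ, ?_⟩
  intro x _ y _ a b ha hb hab
  have hb' : b = 1 - a := by linarith
  subst hb'
  have h := (hG x y a ⟨ha, by linarith⟩).dotProduct_mulVec_nonneg v
  have h2 : star v ⬝ᵥ (a • G x + (1 - a) • G y - G (a • x + (1 - a) • y)) *ᵥ v =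
      a * (v ⬝ᵥ (G x) *ᵥ v) + (1 - a) * (v ⬝ᵥ (G y) *ᵥ v)
        - v ⬝ᵥ (G (a • x + (1 - a) • y)) *ᵥ v := by
    simp [sub_mulVec, add_mulVec, smul_mulVec, dotProduct_sub, dotProduct_add,
      dotProduct_smul, smul_eq_mul]
  rw [h2] at h
  simp only [smul_eq_mul]
  linarith

lemma single_quad {l : ℕ} (M : Matrix (Fin l) (Fin l) ℝ) (i j : Fin l) :
    (Pi.single i 1 : Fin l → ℝ) ⬝ᵥ M *ᵥ (Pi.single j 1 : Fin l → ℝ) = M i j := by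
  simp [Matrix.mulVec_single, single_dotProduct]

theorem stmt_4 {d l : ℕ} (F G H : EuclideanSpace ℝ (Fin d) → Matrix (Fin l) (Fin l) ℝ)
    (hGsymm : ∀ x, (G x).IsSymm) (hHsymm : ∀ x, (H x).IsSymm)
    (hG : MatrixConvex G) (hH : MatrixConvex H) (hF : F = G - H) :
    ∀ i j : Fin l,
      ∃ g h : EuclideanSpace ℝ (Fin d) → ℝ,
        ConvexOn ℝ Set.univ g ∧ ConvexOn ℝ Set.univ h ∧ ∀ x, F x i j = g x - h x := by
  intro i j
  set ei : Fin l → ℝ := Pi.single i 1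
  set ej : Fin l → ℝ := Pi.single j 1
  set u : Fin l → ℝ := ei + ej
  refine ⟨fun x => (1/2 : ℝ) * (u ⬝ᵥ (G x) *ᵥ u + ei ⬝ᵥ (H x) *ᵥ ei + ej ⬝ᵥ (H x) *ᵥ ej),
          fun x => (1/2 : ℝ) * (u ⬝ᵥ (H x) *ᵥ u + ei ⬝ᵥ (G x) *ᵥ ei + ej ⬝ᵥ (G x) *ᵥ ej),
          ?_, ?_, ?_⟩
  · have := (((quad_convex G hG u).add (quad_convex H hH ei)).add (quad_convex H hH ej)).smul
      (by norm_num : (0:ℝ) ≤ 1/2)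
    simpa [smul_eq_mul, mul_add] using this
  · have := (((quad_convex H hH u).add (quad_convex G hG ei)).add (quad_convex G hG ej)).smul
      (by norm_num : (0:ℝ) ≤ 1/2)
    simpa [smul_eq_mul, mul_add] using this
  · intro x
    have hGq : u ⬝ᵥ (G x) *ᵥ u = G x i i + G x i j + G x j i + G x j j := by
      simp only [u, dotProduct_add, add_dotProduct, mulVec_add, ei, ej, single_quad]
      ring
    have hHq : u ⬝ᵥ (H x) *ᵥ u = H x i i + H x i j + H x j i + H x j j := by
      simp only [u, dotProduct_add, add_dotProduct, mulVec_add, ei, ej, single_quad]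
      ring
    have hGs : G x j i = G x i j := by
      have := (hGsymm x); rw [Matrix.IsSymm] at this
      conv_lhs => rw [← this]
      rfl
    have hHs : H x j i = H x i j := by
      have := (hHsymm x); rw [Matrix.IsSymm] at this
      conv_lhs => rw [← this]
      rfl
    have hFx : F x i j = G x i j - H x i j := by rw [hF]; rfl
    rw [hFx]
    simp only [hGq, hHq, ei, ej, single_quad]
    rw [hGs, hHs]
    ring
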